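/- If a logic L enjoys the κ-ary simple parametrized local IL with respect to a family Ψ, then for every semisimple theory T of L and every α-tuple of formulas φ̄ (0 < α < κ): if T ∪ I(φ̄, π̄) ⊢_L Fm for every I ∈ Ψ_α and every tuple π̄, then T ⊢_L φᵢ for every φᵢ in φ̄. -/

import Mathlib

set_option linter.unusedVariables false

open FirstOrder Set

universe u

/-- Substitution composition for terms of a first-order language. -/
theorem FirstOrder.Language.Term.subst_subst' {L : FirstOrder.Language.{u, u}} {α β γ : Type u}
    (t : L.Term α) (f : α → L.Term β) (g : β → L.Term γ) :
    (t.subst f).subst g = t.subst (fun i => (f i).subst g) := by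
  induction t with
  | var => rfl
  | func f ts ih => simp only [Language.Term.subst, ih]

/-- A logic over the absolutely free algebra of `L`-terms in variables `Var`. -/
structure Logic (L : FirstOrder.Language.{u, u}) (Var : Type u) where
  Deriv : Set (L.Term Var) → L.Term Var → Prop
  deriv_refl : ∀ φ : L.Term Var, Deriv {φ} φ
  deriv_mono : ∀ {Γ Δ : Set (L.Term Var)} {φ : L.Term Var}, Deriv Γ φ → Γ ⊆ Δ → Deriv Δ φ
  deriv_cut : ∀ {Γ Φ : Set (L.Term Var)} {φ : L.Term Var},
      (∀ ψ ∈ Φ, Deriv Γ ψ) → Deriv Φ φ → Deriv Γ φ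
  deriv_subst : ∀ {Γ : Set (L.Term Var)} {φ : L.Term Var} (σ : Var → L.Term Var),
      Deriv Γ φ → Deriv ((fun t => t.subst σ) '' Γ) (φ.subst σ)

namespace Logic

variable {L : FirstOrder.Language.{u, u}} {Var : Type u} (Lg : Logic L Var)

/-- `Γ ⊢ φ` for every `φ ∈ Δ`. -/
def DerivAll (Γ Δ : Set (L.Term Var)) : Prop := ∀ φ ∈ Δ, Lg.Deriv Γ φ

/-- `Γ ⊢ Fm`, i.e. `Γ` derives every formula. -/
def Inc (Γ : Set (L.Term Var)) : Prop := ∀ φ : L.Term Var, Lg.Deriv Γ φ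

/-- A theory of the logic: a deductively closed set of formulas. -/
def IsTheory (T : Set (L.Term Var)) : Prop := ∀ φ : L.Term Var, Lg.Deriv T φ → φ ∈ T

/-- A simple theory: a maximal non-trivial theory. -/
def IsSimple (T : Set (L.Term Var)) : Prop :=
  Lg.IsTheory T ∧ T ≠ univ ∧
    ∀ T' : Set (L.Term Var), Lg.IsTheory T' → T' ≠ univ → T ⊆ T' → T' = T

/-- A semisimple theory: an intersection of simple theories. -/
def IsSemisimple (T : Set (L.Term Var)) : Prop :=
  ∃ S : Set (Set (L.Term Var)), (∀ U ∈ S, Lg.IsSimple U) ∧ T = ⋂₀ S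

/-- A semisimple logic: every theory is an intersection of simple theories. -/
def Semisimple : Prop := ∀ T : Set (L.Term Var), Lg.IsTheory T → Lg.IsSemisimple T

/-- A coatomic logic: every non-trivial theory extends to a simple theory. -/
def Coatomic : Prop :=
  ∀ T : Set (L.Term Var), Lg.IsTheory T → T ≠ univ → ∃ U, Lg.IsSimple U ∧ T ⊆ U

/-- A matrix `⟨A, F⟩` is a model of the logic if the preimage of `F` under any
homomorphism (equivalently, the realization along any valuation) is a theory. -/
def IsModel (A : Type u) [L.Structure A] (F : Set A) : Prop :=
  ∀ v : Var → A, Lg.IsTheory {φ : L.Term Var | φ.realize v ∈ F}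

/-- `Γ ⊢ ∅`: `Γ` cannot be jointly designated in any non-trivial model. -/
def Antitheorem (Γ : Set (L.Term Var)) : Prop :=
  ∀ (A : Type u) [L.Structure A], ∀ F : Set A, Lg.IsModel A F → F ≠ univ →
    ∀ v : Var → A, ¬((fun φ : L.Term Var => φ.realize v) '' Γ ⊆ F)

/-- κ-compactness: every inconsistent set has an inconsistent subset of size `< κ`. -/
def Compact (κ : Cardinal.{u}) : Prop :=
  ∀ Γ : Set (L.Term Var), Lg.Inc Γ → ∃ Γ' ⊆ Γ, Cardinal.mk ↥Γ' < κ ∧ Lg.Inc Γ'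

/-- κ-arity: any derivation uses fewer than κ premises. -/
def Ary (κ : Cardinal.{u}) : Prop :=
  ∀ (Γ : Set (L.Term Var)) (φ : L.Term Var), Lg.Deriv Γ φ →
    ∃ Γ' ⊆ Γ, Cardinal.mk ↥Γ' < κ ∧ Lg.Deriv Γ' φ

end Logic

/-- A parametrized family: for each ordinal `α`, a family of sets of formulas in
`α`-many variable slots together with parameter slots (indexed by `Var`). -/
abbrev PFam (L : FirstOrder.Language.{u, u}) (Var : Type u) : Type (u + 1) :=
  ∀ α : Ordinal.{u}, Set (Set (L.Term (α.ToType ⊕ Var)))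

/-- A local (parameter-free) family. -/
abbrev LFam (L : FirstOrder.Language.{u, u}) (Var : Type u) : Type (u + 1) :=
  ∀ α : Ordinal.{u}, Set (Set (L.Term α.ToType))

/-- A global family: a single set of formulas for each ordinal `α`. -/
abbrev GFam (L : FirstOrder.Language.{u, u}) (Var : Type u) : Type (u + 1) :=
  ∀ α : Ordinal.{u}, Set (L.Term α.ToType)

namespace Logic

variable {L : FirstOrder.Language.{u, u}} {Var : Type u}

/-- `I(φ̄, π̄)`: instantiation of a parametrized set of formulas. -/
def pInst {α : Ordinal.{u}} (I : Set (L.Term (α.ToType ⊕ Var)))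
    (phis : α.ToType → L.Term Var) (pis : Var → L.Term Var) : Set (L.Term Var) :=
  (fun t => t.subst (Sum.elim phis pis)) '' I

/-- `I(φ̄)`: instantiation of a parameter-free set of formulas. -/
def lInst {α : Ordinal.{u}} (I : Set (L.Term α.ToType))
    (phis : α.ToType → L.Term Var) : Set (L.Term Var) :=
  (fun t => t.subst phis) '' I

variable (Lg : Logic L Var)

/-- The κ-ary parametrized local inconsistency lemma w.r.t. the family `Ψ`. -/
def ParamLocalIL (κ : Cardinal.{u}) (Ψ : PFam L Var) : Prop :=
  ∀ α : Ordinal.{u}, 0 < α → α < κ.ord →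
    ∀ (Γ : Set (L.Term Var)) (phis : α.ToType → L.Term Var),
      Lg.Inc (Γ ∪ range phis) ↔
        ∃ I ∈ Ψ α, ∃ pis : Var → L.Term Var, Lg.DerivAll Γ (pInst I phis pis)

/-- The κ-ary local inconsistency lemma w.r.t. the family `Ψ`. -/
def LocalIL (κ : Cardinal.{u}) (Ψ : LFam L Var) : Prop :=
  ∀ α : Ordinal.{u}, 0 < α → α < κ.ord →
    ∀ (Γ : Set (L.Term Var)) (phis : α.ToType → L.Term Var),
      Lg.Inc (Γ ∪ range phis) ↔ ∃ I ∈ Ψ α, Lg.DerivAll Γ (lInst I phis)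

/-- The κ-ary global inconsistency lemma w.r.t. the family `Ψ`. -/
def GlobalIL (κ : Cardinal.{u}) (Ψ : GFam L Var) : Prop :=
  Lg.LocalIL κ (fun α => {Ψ α})

/-- The κ-ary dual parametrized local inconsistency lemma w.r.t. the family `Ψ`. -/
def DualParamLocalIL (κ : Cardinal.{u}) (Ψ : PFam L Var) : Prop :=
  ∀ α : Ordinal.{u}, 0 < α → α < κ.ord →
    ∀ (Γ : Set (L.Term Var)) (phis : α.ToType → L.Term Var),
      (∀ i, Lg.Deriv Γ (phis i)) ↔
        ∀ I ∈ Ψ α, ∀ pis : Var → L.Term Var, Lg.Inc (Γ ∪ pInst I phis pis)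

/-- The κ-ary dual local inconsistency lemma w.r.t. the family `Ψ`. -/
def DualLocalIL (κ : Cardinal.{u}) (Ψ : LFam L Var) : Prop :=
  ∀ α : Ordinal.{u}, 0 < α → α < κ.ord →
    ∀ (Γ : Set (L.Term Var)) (phis : α.ToType → L.Term Var),
      (∀ i, Lg.Deriv Γ (phis i)) ↔ ∀ I ∈ Ψ α, Lg.Inc (Γ ∪ lInst I phis)

/-- The κ-ary dual global inconsistency lemma w.r.t. the family `Ψ`. -/
def DualGlobalIL (κ : Cardinal.{u}) (Ψ : GFam L Var) : Prop :=
  Lg.DualLocalIL κ (fun α => {Ψ α})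

/-- The κ-ary classical parametrized local IL: both the ordinary and dual IL. -/
def ClassicalParamLocalIL (κ : Cardinal.{u}) (Ψ : PFam L Var) : Prop :=
  Lg.ParamLocalIL κ Ψ ∧ Lg.DualParamLocalIL κ Ψ

/-- The κ-ary classical local IL: both the ordinary and dual IL. -/
def ClassicalLocalIL (κ : Cardinal.{u}) (Ψ : LFam L Var) : Prop :=
  Lg.LocalIL κ Ψ ∧ Lg.DualLocalIL κ Ψ

/-- The κ-ary classical global IL: both the ordinary and dual IL. -/
def ClassicalGlobalIL (κ : Cardinal.{u}) (Ψ : GFam L Var) : Prop :=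
  Lg.GlobalIL κ Ψ ∧ Lg.DualGlobalIL κ Ψ

/-- The κ-ary parametrized local law of the excluded middle w.r.t. `Ψ`. -/
def ParamLocalLEM (κ : Cardinal.{u}) (Ψ : PFam L Var) : Prop :=
  (∀ α : Ordinal.{u}, 0 < α → α < κ.ord → ∀ I ∈ Ψ α,
    ∀ (phis : α.ToType → L.Term Var) (pis : Var → L.Term Var),
      Lg.Inc (range phis ∪ pInst I phis pis)) ∧
  (∀ α : Ordinal.{u}, 0 < α → α < κ.ord →
    ∀ (Γ : Set (L.Term Var)) (phis : α.ToType → L.Term Var) (ψ : L.Term Var),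
      Lg.Deriv (Γ ∪ range phis) ψ →
      (∀ I ∈ Ψ α, ∀ pis : Var → L.Term Var, Lg.Deriv (Γ ∪ pInst I phis pis) ψ) →
      Lg.Deriv Γ ψ)

/-- The κ-ary local law of the excluded middle w.r.t. `Ψ`. -/
def LocalLEM (κ : Cardinal.{u}) (Ψ : LFam L Var) : Prop :=
  (∀ α : Ordinal.{u}, 0 < α → α < κ.ord → ∀ I ∈ Ψ α,
    ∀ phis : α.ToType → L.Term Var, Lg.Inc (range phis ∪ lInst I phis)) ∧
  (∀ α : Ordinal.{u}, 0 < α → α < κ.ord →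
    ∀ (Γ : Set (L.Term Var)) (phis : α.ToType → L.Term Var) (ψ : L.Term Var),
      Lg.Deriv (Γ ∪ range phis) ψ →
      (∀ I ∈ Ψ α, Lg.Deriv (Γ ∪ lInst I phis) ψ) → Lg.Deriv Γ ψ)

/-- The κ-ary simple parametrized local IL w.r.t. `Ψ`. -/
def SimpleParamLocalIL (κ : Cardinal.{u}) (Ψ : PFam L Var) : Prop :=
  (∀ α : Ordinal.{u}, 0 < α → α < κ.ord → ∀ I ∈ Ψ α,
    ∀ (phis : α.ToType → L.Term Var) (pis : Var → L.Term Var),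
      Lg.Inc (range phis ∪ pInst I phis pis)) ∧
  (∀ α : Ordinal.{u}, 0 < α → α < κ.ord →
    ∀ T : Set (L.Term Var), Lg.IsSimple T → ∀ phis : α.ToType → L.Term Var,
      Lg.Inc (T ∪ range phis) →
        ∃ I ∈ Ψ α, ∃ pis : Var → L.Term Var, Lg.DerivAll T (pInst I phis pis))

/-- The κ-ary simple local IL w.r.t. `Ψ`. -/
def SimpleLocalIL (κ : Cardinal.{u}) (Ψ : LFam L Var) : Prop :=
  (∀ α : Ordinal.{u}, 0 < α → α < κ.ord → ∀ I ∈ Ψ α,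
    ∀ phis : α.ToType → L.Term Var, Lg.Inc (range phis ∪ lInst I phis)) ∧
  (∀ α : Ordinal.{u}, 0 < α → α < κ.ord →
    ∀ T : Set (L.Term Var), Lg.IsSimple T → ∀ phis : α.ToType → L.Term Var,
      Lg.Inc (T ∪ range phis) → ∃ I ∈ Ψ α, Lg.DerivAll T (lInst I phis))

end Logic

/-- Family for the parametrized local DDT: sets of formulas `I(p̄, q, r̄)`. -/
abbrev PFamD (L : FirstOrder.Language.{u, u}) (Var : Type u) : Type (u + 1) :=
  ∀ α : Ordinal.{u}, Set (Set (L.Term (α.ToType ⊕ (PUnit.{u + 1} ⊕ Var))))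

/-- Family for the local DDT: sets of formulas `I(p̄, q)`. -/
abbrev LFamD (L : FirstOrder.Language.{u, u}) (Var : Type u) : Type (u + 1) :=
  ∀ α : Ordinal.{u}, Set (Set (L.Term (α.ToType ⊕ PUnit.{u + 1})))

/-- Family for the global DDT: a single set `I(p̄, q)` for each `α`. -/
abbrev GFamD (L : FirstOrder.Language.{u, u}) (Var : Type u) : Type (u + 1) :=
  ∀ α : Ordinal.{u}, Set (L.Term (α.ToType ⊕ PUnit.{u + 1}))

namespace Logic

variable {L : FirstOrder.Language.{u, u}} {Var : Type u}

/-- `I(φ̄, ψ)`: instantiation of a DDT set of formulas. -/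
def dInst {α : Ordinal.{u}} (I : Set (L.Term (α.ToType ⊕ PUnit.{u + 1})))
    (phis : α.ToType → L.Term Var) (ψ : L.Term Var) : Set (L.Term Var) :=
  (fun t => t.subst (Sum.elim phis (fun _ => ψ))) '' I

/-- `I(φ̄, ψ, π̄)`: instantiation of a parametrized DDT set of formulas. -/
def pdInst {α : Ordinal.{u}} (I : Set (L.Term (α.ToType ⊕ (PUnit.{u + 1} ⊕ Var))))
    (phis : α.ToType → L.Term Var) (ψ : L.Term Var) (pis : Var → L.Term Var) :
    Set (L.Term Var) :=
  (fun t => t.subst (Sum.elim phis (Sum.elim (fun _ => ψ) pis))) '' I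

variable (Lg : Logic L Var)

/-- The κ-ary local deduction--detachment theorem w.r.t. `Φ`. -/
def LocalDDT (κ : Cardinal.{u}) (Φ : LFamD L Var) : Prop :=
  ∀ α : Ordinal.{u}, 0 < α → α < κ.ord →
    ∀ (Γ : Set (L.Term Var)) (phis : α.ToType → L.Term Var) (ψ : L.Term Var),
      Lg.Deriv (Γ ∪ range phis) ψ ↔ ∃ I ∈ Φ α, Lg.DerivAll Γ (dInst I phis ψ)

/-- The κ-ary global deduction--detachment theorem w.r.t. `Φ`. -/
def GlobalDDT (κ : Cardinal.{u}) (Φ : GFamD L Var) : Prop :=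
  Lg.LocalDDT κ (fun α => {Φ α})

/-- The κ-ary parametrized local deduction--detachment theorem w.r.t. `Φ`. -/
def ParamLocalDDT (κ : Cardinal.{u}) (Φ : PFamD L Var) : Prop :=
  ∀ α : Ordinal.{u}, 0 < α → α < κ.ord →
    ∀ (Γ : Set (L.Term Var)) (phis : α.ToType → L.Term Var) (ψ : L.Term Var),
      Lg.Deriv (Γ ∪ range phis) ψ ↔
        ∃ I ∈ Φ α, ∃ pis : Var → L.Term Var, Lg.DerivAll Γ (pdInst I phis ψ pis)

/-- A protoimplication set: a set `Δ(p, q)` of formulas in two variables with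
`∅ ⊢ Δ(p, p)` and `p, Δ(p, q) ⊢ q` (stated via all instances, by structurality). -/
def HasProtoimplication : Prop :=
  ∃ Δ : Set (L.Term (ULift.{u} Bool)),
    (∀ φ : L.Term Var,
      Lg.DerivAll ∅ ((fun t => t.subst (fun _ => φ)) '' Δ)) ∧
    (∀ φ ψ : L.Term Var,
      Lg.Deriv (insert φ ((fun t => t.subst (fun b => if b.down then ψ else φ)) '' Δ)) ψ)

/-- A rule `Γ ⊢ φ̄` is antiadmissible: substitution instances preserve
inconsistency in every context. -/
def Antiadmissible {ι : Type u} (Γ : Set (L.Term Var)) (phis : ι → L.Term Var) : Prop :=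
  ∀ (σ : Var → L.Term Var) (Δ : Set (L.Term Var)),
    Lg.Inc (range (fun i => (phis i).subst σ) ∪ Δ) →
    Lg.Inc ((fun t => t.subst σ) '' Γ ∪ Δ)

/-- The semisimple companion of a logic: the logic determined by the
simple theories of `Lg`. -/
def companion (Lg : Logic L Var) : Logic L Var where
  Deriv Γ φ := ∀ T : Set (L.Term Var), Lg.IsSimple T →
    ∀ σ : Var → L.Term Var, (fun t => t.subst σ) '' Γ ⊆ T → φ.subst σ ∈ T
  deriv_refl := by
    intro φ T _ σ h
    exact h ⟨φ, rfl, rfl⟩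
  deriv_mono := by
    intro Γ Δ φ hΓ hsub T hT σ h
    exact hΓ T hT σ (fun x hx => h ((Set.image_mono hsub) hx))
  deriv_cut := by
    intro Γ Φ φ hΓ hΦ T hT σ h
    refine hΦ T hT σ ?_
    rintro x ⟨ψ, hψ, rfl⟩
    exact hΓ ψ hψ T hT σ h
  deriv_subst := by
    intro Γ φ σ hΓ T hT τ h
    rw [FirstOrder.Language.Term.subst_subst']
    refine hΓ T hT (fun v => (σ v).subst τ) ?_
    rintro x ⟨ψ, hψ, rfl⟩
    show (ψ.subst fun v => (σ v).subst τ) ∈ T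
    rw [← FirstOrder.Language.Term.subst_subst']
    exact h ⟨ψ.subst σ, ⟨ψ, hψ, rfl⟩, rfl⟩

/-- Equivalence of two parametrized IL families, stated through all of their
instances (which, by structurality, is equivalent to the schematic entailments
`I(p̄, q̄) ⊢ I'(p̄, π̄')`). -/
def FamEquiv (Lg : Logic L Var) (κ : Cardinal.{u}) (Ψ Ψ' : PFam L Var) : Prop :=
  (∀ α : Ordinal.{u}, 0 < α → α < κ.ord →
    ∀ I ∈ Ψ α, ∃ I' ∈ Ψ' α, ∃ pis' : Var → L.Term (α.ToType ⊕ Var),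
      ∀ (phis : α.ToType → L.Term Var) (rhos : Var → L.Term Var),
        Lg.DerivAll (pInst I phis rhos)
          (pInst I' phis (fun v => (pis' v).subst (Sum.elim phis rhos)))) ∧
  (∀ α : Ordinal.{u}, 0 < α → α < κ.ord →
    ∀ I' ∈ Ψ' α, ∃ I ∈ Ψ α, ∃ pis : Var → L.Term (α.ToType ⊕ Var),
      ∀ (phis : α.ToType → L.Term Var) (rhos : Var → L.Term Var),
        Lg.DerivAll (pInst I' phis rhos)
          (pInst I phis (fun v => (pis v).subst (Sum.elim phis rhos))))

end Logic


/-! A formula outside a simple theory `U` makes `U` inconsistent, so the simple IL yields an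
instance `I(φ̄, π̄) ⊆ U`; the hypothesis then makes `U` itself trivial. Hence every `φᵢ` lies in
every simple theory above `T`, and so in their intersection `T`. -/

namespace Logic

variable {L : FirstOrder.Language.{u, u}} {Var : Type u} (Lg : Logic L Var)

theorem deriv_of_mem {Γ : Set (L.Term Var)} {φ : L.Term Var} (hφ : φ ∈ Γ) : Lg.Deriv Γ φ :=
  Lg.deriv_mono (Lg.deriv_refl φ) (singleton_subset_iff.mpr hφ)

theorem inc_mono {Γ Δ : Set (L.Term Var)} (hΓ : Lg.Inc Γ) (hΓΔ : Γ ⊆ Δ) : Lg.Inc Δ :=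
  fun φ => Lg.deriv_mono (hΓ φ) hΓΔ

theorem isTheory_setOf_deriv (Γ : Set (L.Term Var)) : Lg.IsTheory {φ | Lg.Deriv Γ φ} :=
  fun _ hφ => Lg.deriv_cut (fun _ hψ => hψ) hφ

variable {Lg}

theorem IsTheory.eq_univ_of_inc {T : Set (L.Term Var)} (hT : Lg.IsTheory T) (hinc : Lg.Inc T) :
    T = univ :=
  eq_univ_of_forall fun φ => hT φ (hinc φ)

theorem IsTheory.subset_of_derivAll {T Δ : Set (L.Term Var)} (hT : Lg.IsTheory T)
    (hΔ : Lg.DerivAll T Δ) : Δ ⊆ T :=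
  fun φ hφ => hT φ (hΔ φ hφ)

/-- Maximality: the consequences of `insert φ U` form a theory strictly above `U`. -/
theorem IsSimple.inc_insert_of_not_mem {U : Set (L.Term Var)} (hU : Lg.IsSimple U)
    {φ : L.Term Var} (hφ : φ ∉ U) : Lg.Inc (insert φ U) := by
  set C := {ψ | Lg.Deriv (insert φ U) ψ}
  have hU_sub : U ⊆ C := fun ψ hψ => Lg.deriv_of_mem (mem_insert_of_mem φ hψ)
  have hφ_mem : φ ∈ C := Lg.deriv_of_mem (mem_insert φ U)
  by_contra hcons
  have hC_ne : C ≠ univ := fun hC => hcons (eq_univ_iff_forall.mp hC)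
  exact hφ (hU.2.2 C (Lg.isTheory_setOf_deriv _) hC_ne hU_sub ▸ hφ_mem)

theorem SimpleParamLocalIL.mem_of_forall_inc {κ : Cardinal.{u}} {Ψ : PFam L Var}
    (h : Lg.SimpleParamLocalIL κ Ψ) {U : Set (L.Term Var)} (hU : Lg.IsSimple U)
    {α : Ordinal.{u}} (hα0 : 0 < α) (hακ : α < κ.ord) {phis : α.ToType → L.Term Var}
    (hinc : ∀ I ∈ Ψ α, ∀ pis : Var → L.Term Var, Lg.Inc (U ∪ pInst I phis pis)) (i : α.ToType) :
    phis i ∈ U := by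
  by_contra hi
  have hU_phis : Lg.Inc (U ∪ range phis) :=
    Lg.inc_mono (hU.inc_insert_of_not_mem hi)
      (insert_subset (mem_union_right U (mem_range_self i)) subset_union_left)
  obtain ⟨I, hI, pis, hderiv⟩ := h.2 α hα0 hακ U hU phis hU_phis
  have hU_inc : Lg.Inc U := by
    simpa only [union_eq_left.mpr (hU.1.subset_of_derivAll hderiv)] using hinc I hI pis
  exact hU.2.1 (hU.1.eq_univ_of_inc hU_inc)

end Logic

theorem statement_12_general {L : FirstOrder.Language.{u, u}} {Var : Type u} (Lg : Logic L Var) (κ : Cardinal.{u})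
    (Ψ : PFam L Var) (h : Lg.SimpleParamLocalIL κ Ψ) :
    ∀ T : Set (L.Term Var), Lg.IsSemisimple T →
      ∀ α : Ordinal.{u}, 0 < α → α < κ.ord →
        ∀ phis : α.ToType → L.Term Var,
          (∀ I ∈ Ψ α, ∀ pis : Var → L.Term Var, Lg.Inc (T ∪ Logic.pInst I phis pis)) →
          ∀ i, Lg.Deriv T (phis i) := by
  rintro T ⟨S, hS, rfl⟩ α hα0 hακ phis hinc i
  refine Lg.deriv_of_mem fun U hU => h.mem_of_forall_inc (hS U hU) hα0 hακ (fun I hI pis => ?_) i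
  exact Lg.inc_mono (hinc I hI pis) (union_subset_union_left _ (sInter_subset_of_mem hU))

/-- the simple parametrized local IL extends from simple to
semisimple theories (in its dual form). -/
theorem statement_12 {L : FirstOrder.Language.{u, u}} {Var : Type u} (Lg : Logic L Var) (κ : Cardinal.{u})
    (hκ1 : 1 < κ) (hκ2 : κ ≤ Order.succ (Cardinal.mk Var))
    (Ψ : PFam L Var) (h : Lg.SimpleParamLocalIL κ Ψ) :
    ∀ T : Set (L.Term Var), Lg.IsSemisimple T →
      ∀ α : Ordinal.{u}, 0 < α → α < κ.ord →
        ∀ phis : α.ToType → L.Term Var,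
          (∀ I ∈ Ψ α, ∀ pis : Var → L.Term Var, Lg.Inc (T ∪ Logic.pInst I phis pis)) →
          ∀ i, Lg.Deriv T (phis i) :=
  statement_12_general Lg κ Ψ h
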